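/- There exists a constant C > 0 such that for every a ∈ [7/4, 2], the functions ψ⁺_a(x) := (2πa)^{−1/2}·e^{−(x+1)²/(2a)}/(1 + e^{2x/a}) and ψ⁻_a(x) := (2πa)^{−1/2}·e^{−(x+1)²/(2a)}/(1 + e^{−2x/a}) satisfy ∫_ℝ |ψ̂⁺_a(ξ)| dξ ≤ C and ∫_ℝ |ψ̂⁻_a(ξ)| dξ ≤ C, where ĝ(ξ) := ∫_ℝ g(x)e^{ixξ} dx. -/

import Mathlib

open Matrix MeasureTheory Filter
open scoped ComplexOrder

noncomputable section

/-- The space of `d × d` complex matrices. -/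
abbrev Mat (d : ℕ) : Type := Matrix (Fin d) (Fin d) ℂ

/-- The Gibbs state `ρ_β = exp(-βH)/Tr(exp(-βH))`. -/
def gibbs {d : ℕ} (H : Mat d) (β : ℝ) : Mat d :=
  (Matrix.trace (NormedSpace.exp ((-β : ℂ) • H)))⁻¹ • NormedSpace.exp ((-β : ℂ) • H)

/-- The power `ρ_β^s = exp(-sβH)/Tr(exp(-βH))^s`. -/
def gibbsPow {d : ℕ} (H : Mat d) (β s : ℝ) : Mat d :=
  ((Matrix.trace (NormedSpace.exp ((-β : ℂ) • H))) ^ (s : ℂ))⁻¹ •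
    NormedSpace.exp ((-(s * β) : ℂ) • H)

/-- The Hilbert–Schmidt inner product `⟨A,B⟩₂ = Tr(A† B)`. -/
def hsInner {d : ℕ} (A B : Mat d) : ℂ := Matrix.trace (Aᴴ * B)

/-- The KMS inner product `⟨A,B⟩_{ρ_β} = Tr(A† ρ_β^{1/2} B ρ_β^{1/2})`. -/
def kmsInner {d : ℕ} (H : Mat d) (β : ℝ) (A B : Mat d) : ℂ :=
  Matrix.trace (Aᴴ * gibbsPow H β (1/2) * B * gibbsPow H β (1/2))

/-- The trace norm `‖A‖₁ = Tr √(A†A)`. -/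
def traceNorm {d : ℕ} (A : Mat d) : ℝ :=
  ((((Matrix.posSemidef_conjTranspose_mul_self A).1.eigenvectorUnitary : Mat d) *
    Matrix.diagonal (fun i => ((√((Matrix.posSemidef_conjTranspose_mul_self A).1.eigenvalues i) : ℝ) : ℂ)) *
    (star (Matrix.posSemidef_conjTranspose_mul_self A).1.eigenvectorUnitary : Mat d)).trace).re

/-- The operator (spectral) norm of a matrix. -/
def opNorm {d : ℕ} (A : Mat d) : ℝ :=
  ‖Matrix.toEuclideanCLM (𝕜 := ℂ) A‖

/-- The Frobenius / Hilbert–Schmidt norm `‖A‖₂ = √Tr(A†A)`. -/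
def frobNorm {d : ℕ} (A : Mat d) : ℝ :=
  Real.sqrt ((Matrix.trace (Aᴴ * A)).re)

attribute [local instance] Matrix.frobeniusNormedAddCommGroup Matrix.frobeniusNormedSpace

/-- The exponential of a linear endomorphism of matrix space. -/
def endExp {d : ℕ} (L : Mat d →ₗ[ℂ] Mat d) : Mat d →ₗ[ℂ] Mat d :=
  (@NormedSpace.exp _ _ _ (@NonUnitalSeminormedRing.toIsTopologicalRing (Mat d →L[ℂ] Mat d)
    (ContinuousLinearMap.toNormedRing (E := Mat d) (𝕜 := ℂ)).toSeminormedRing.toNonUnitalSeminormedRing)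
    (LinearMap.toContinuousLinearMap L)).toLinearMap

/-- The induced trace norm (1→1 norm) of a linear map on matrices. -/
def oneNorm {d : ℕ} (L : Mat d →ₗ[ℂ] Mat d) : ℝ :=
  ⨆ A : {A : Mat d // traceNorm A = 1}, traceNorm (L A.1)

/-!
`ψ±_a` is the density of `N(-1, a)` multiplied by the sigmoid `σ(∓2x/a)`, `σ(y) = (1 + e^{-y})⁻¹`.
Since `σ`, `σ' = σ(1 - σ)` and `σ'' = σ(1 - σ)(1 - 2σ)` are bounded by `1` and the slope `2/a` is
at most `2`, the kernel and its first two derivatives are dominated by a multiple of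
`(1 + (x + 1)²)` times the density, hence, for `1 ≤ a ≤ 2`, by a fixed multiple of the `N(-1, 4)`
density. Two integrations by parts give `(1 + ξ²) |ψ̂(ξ)| ≤ ‖ψ‖₁ + ‖ψ''‖₁`, and
`∫ (1 + ξ²)⁻¹ dξ = π` turns this into a bound on `∫ |ψ̂|` that is uniform in `a`.
-/

open Real Complex FourierTransform ProbabilityTheory
open scoped NNReal

theorem integral_mul_cexp_eq_fourier (f : ℝ → ℂ) (ξ : ℝ) :
    ∫ x : ℝ, f x * cexp (I * x * ξ) = 𝓕 f (-ξ / (2 * π)) := by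
  rw [Real.fourier_real_eq_integral_exp_smul]
  congr 1 with x
  rw [smul_eq_mul, mul_comm]
  congr 2
  push_cast
  field_simp

theorem integral_deriv_mul_cexp {f f' : ℝ → ℂ} (hf : ∀ x, HasDerivAt f (f' x) x)
    (hfi : Integrable f) (hf'i : Integrable f') (ξ : ℝ) :
    ∫ x : ℝ, f' x * cexp (I * x * ξ) = -(I * ξ) * ∫ x : ℝ, f x * cexp (I * x * ξ) := by
  have hderiv : deriv f = f' := funext fun x => (hf x).deriv
  rw [integral_mul_cexp_eq_fourier, integral_mul_cexp_eq_fourier, ← hderiv,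
    Real.fourier_deriv hfi (fun x => (hf x).differentiableAt) (hderiv ▸ hf'i)]
  beta_reduce
  rw [smul_eq_mul]
  congr 1
  push_cast
  field_simp

theorem norm_integral_mul_cexp_le (f : ℝ → ℂ) (ξ : ℝ) :
    ‖∫ x : ℝ, f x * cexp (I * x * ξ)‖ ≤ ∫ x : ℝ, ‖f x‖ := by
  refine (norm_integral_le_integral_norm _).trans (le_of_eq ?_)
  congr 1 with x
  have hphase : I * x * ξ = ((x * ξ : ℝ) : ℂ) * I := by push_cast; ring
  rw [norm_mul, hphase, norm_exp_ofReal_mul_I, mul_one]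

theorem one_add_sq_mul_norm_integral_mul_cexp_le {f f' f'' : ℝ → ℂ}
    (hf : ∀ x, HasDerivAt f (f' x) x) (hf' : ∀ x, HasDerivAt f' (f'' x) x)
    (hfi : Integrable f) (hf'i : Integrable f') (hf''i : Integrable f'') (ξ : ℝ) :
    (1 + ξ ^ 2) * ‖∫ x : ℝ, f x * cexp (I * x * ξ)‖ ≤ (∫ x, ‖f x‖) + ∫ x, ‖f'' x‖ := by
  have hsecond : ξ ^ 2 * ‖∫ x : ℝ, f x * cexp (I * x * ξ)‖ = ‖∫ x : ℝ, f'' x * cexp (I * x * ξ)‖ := by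
    rw [integral_deriv_mul_cexp hf' hf'i hf''i, integral_deriv_mul_cexp hf hfi hf'i, ← mul_assoc,
      norm_mul]
    congr 1
    simp [sq]
  rw [add_mul, one_mul, hsecond]
  exact add_le_add (norm_integral_mul_cexp_le f ξ) (norm_integral_mul_cexp_le f'' ξ)

theorem integral_norm_integral_mul_cexp_le {f f' f'' : ℝ → ℂ}
    (hf : ∀ x, HasDerivAt f (f' x) x) (hf' : ∀ x, HasDerivAt f' (f'' x) x)
    (hfi : Integrable f) (hf'i : Integrable f') (hf''i : Integrable f'') :
    ∫ ξ : ℝ, ‖∫ x : ℝ, f x * cexp (I * x * ξ)‖ ≤ π * ((∫ x, ‖f x‖) + ∫ x, ‖f'' x‖) := by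
  set B := (∫ x, ‖f x‖) + ∫ x, ‖f'' x‖
  have hdecay (ξ : ℝ) : ‖∫ x : ℝ, f x * cexp (I * x * ξ)‖ ≤ B * (1 + ξ ^ 2)⁻¹ := by
    rw [le_mul_inv_iff₀ (by positivity), mul_comm]
    exact one_add_sq_mul_norm_integral_mul_cexp_le hf hf' hfi hf'i hf''i ξ
  calc ∫ ξ : ℝ, ‖∫ x : ℝ, f x * cexp (I * x * ξ)‖
      ≤ ∫ ξ : ℝ, B * (1 + ξ ^ 2)⁻¹ :=
        integral_mono_of_nonneg (Eventually.of_forall fun _ => norm_nonneg _)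
          (integrable_inv_one_add_sq.const_mul B) (Eventually.of_forall hdecay)
    _ = π * B := by rw [integral_const_mul, integral_univ_inv_one_add_sq, mul_comm]

theorem aestronglyMeasurable_of_hasDerivAt {f f' : ℝ → ℝ} (hf : ∀ x, HasDerivAt f (f' x) x) :
    AEStronglyMeasurable f' := by
  have hderiv : deriv f = f' := funext fun x => (hf x).deriv
  exact hderiv ▸ (measurable_deriv f).aestronglyMeasurable

theorem abs_mul_le_of_abs_le_one {p q m : ℝ} (hp : |p| ≤ m) (hq : |q| ≤ 1) : |p * q| ≤ m := by
  rw [abs_mul]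
  nlinarith [abs_nonneg p, abs_nonneg q]

theorem hasDerivAt_sigmoid_mul_one_sub (y : ℝ) :
    HasDerivAt (fun y => sigmoid y * (1 - sigmoid y))
      (sigmoid y * (1 - sigmoid y) * (1 - 2 * sigmoid y)) y := by
  refine ((hasDerivAt_sigmoid y).mul ((hasDerivAt_sigmoid y).const_sub 1)).congr_deriv ?_
  ring

theorem abs_sigmoid_le_one (y : ℝ) : |sigmoid y| ≤ 1 := by
  rw [abs_of_pos (sigmoid_pos y)]
  exact sigmoid_le_one y

theorem abs_sigmoid_mul_one_sub_le_one (y : ℝ) : |sigmoid y * (1 - sigmoid y)| ≤ 1 := by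
  have hpos := sigmoid_pos y
  have hlt := sigmoid_lt_one y
  rw [abs_le]
  constructor <;> nlinarith

theorem abs_sigmoid_mul_one_sub_mul_le_one (y : ℝ) :
    |sigmoid y * (1 - sigmoid y) * (1 - 2 * sigmoid y)| ≤ 1 := by
  have hpos := sigmoid_pos y
  have hlt := sigmoid_lt_one y
  rw [abs_mul]
  calc |sigmoid y * (1 - sigmoid y)| * |1 - 2 * sigmoid y| ≤ 1 * 1 :=
        mul_le_mul (abs_sigmoid_mul_one_sub_le_one y) (abs_le.2 ⟨by linarith, by linarith⟩)
          (abs_nonneg _) zero_le_one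
    _ = 1 := one_mul 1

section Modulation

variable {u u' u'' s s' s'' : ℝ → ℝ} {b : ℝ}

theorem hasDerivAt_mul_comp_const_mul (hu : ∀ x, HasDerivAt u (u' x) x)
    (hs : ∀ y, HasDerivAt s (s' y) y) (x : ℝ) :
    HasDerivAt (fun y => u y * s (b * y)) (u' x * s (b * x) + b * (u x * s' (b * x))) x := by
  have hs_comp : HasDerivAt (fun y => s (b * y)) (s' (b * x) * b) x :=
    (hs (b * x)).comp x ((hasDerivAt_id x).const_mul b |>.congr_deriv (mul_one b))
  refine ((hu x).mul hs_comp).congr_deriv ?_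
  ring

theorem hasDerivAt_deriv_mul_comp_const_mul (hu : ∀ x, HasDerivAt u (u' x) x)
    (hu' : ∀ x, HasDerivAt u' (u'' x) x) (hs : ∀ y, HasDerivAt s (s' y) y)
    (hs' : ∀ y, HasDerivAt s' (s'' y) y) (x : ℝ) :
    HasDerivAt (fun y => u' y * s (b * y) + b * (u y * s' (b * y)))
      (u'' x * s (b * x) + 2 * b * (u' x * s' (b * x)) + b ^ 2 * (u x * s'' (b * x))) x := by
  refine ((hasDerivAt_mul_comp_const_mul hu' hs x).add
    ((hasDerivAt_mul_comp_const_mul hu hs' x).const_mul b)).congr_deriv ?_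
  ring

end Modulation

section SigmoidModulation

variable {p₀ p₁ p₂ b m : ℝ}

theorem abs_mul_sigmoid_le (h₀ : |p₀| ≤ m) (y : ℝ) : |p₀ * sigmoid y| ≤ m :=
  abs_mul_le_of_abs_le_one h₀ (abs_sigmoid_le_one y)

theorem abs_deriv_mul_sigmoid_le (hb : |b| ≤ 2) (h₀ : |p₀| ≤ m) (h₁ : |p₁| ≤ m) (y : ℝ) :
    |p₁ * sigmoid y + b * (p₀ * (sigmoid y * (1 - sigmoid y)))| ≤ 3 * m := by
  have hp₀ := abs_mul_le_of_abs_le_one h₀ (abs_sigmoid_mul_one_sub_le_one y)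
  have hb' := mul_le_mul hb hp₀ (abs_nonneg _) (by norm_num)
  calc _ ≤ |p₁ * sigmoid y| + |b| * |p₀ * (sigmoid y * (1 - sigmoid y))| :=
        (abs_add_le _ _).trans_eq (by rw [abs_mul b])
    _ ≤ m + 2 * m := add_le_add (abs_mul_sigmoid_le h₁ y) hb'
    _ = 3 * m := by ring

theorem abs_deriv2_mul_sigmoid_le (hb : |b| ≤ 2) (h₀ : |p₀| ≤ m) (h₁ : |p₁| ≤ m)
    (h₂ : |p₂| ≤ m) (y : ℝ) :
    |p₂ * sigmoid y + 2 * b * (p₁ * (sigmoid y * (1 - sigmoid y))) +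
      b ^ 2 * (p₀ * (sigmoid y * (1 - sigmoid y) * (1 - 2 * sigmoid y)))| ≤ 9 * m := by
  have hp₁ := abs_mul_le_of_abs_le_one h₁ (abs_sigmoid_mul_one_sub_le_one y)
  have hp₀ := abs_mul_le_of_abs_le_one h₀ (abs_sigmoid_mul_one_sub_mul_le_one y)
  have hb2 : |b ^ 2| ≤ 4 := by
    rw [abs_pow]; nlinarith [abs_nonneg b]
  have hmid := mul_le_mul (by rw [abs_mul, abs_two]; linarith : |2 * b| ≤ 4) hp₁
    (abs_nonneg _) (by norm_num)
  have hlast := mul_le_mul hb2 hp₀ (abs_nonneg _) (by norm_num)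
  have htri := abs_add_three (p₂ * sigmoid y) (2 * b * (p₁ * (sigmoid y * (1 - sigmoid y))))
    (b ^ 2 * (p₀ * (sigmoid y * (1 - sigmoid y) * (1 - 2 * sigmoid y))))
  rw [abs_mul (2 * b), abs_mul (b ^ 2)] at htri
  linarith [abs_mul_sigmoid_le h₂ y]

end SigmoidModulation

theorem integral_norm_integral_mul_sigmoid_cexp_le {u u' u'' M : ℝ → ℝ} {b : ℝ}
    (hu : ∀ x, HasDerivAt u (u' x) x) (hu' : ∀ x, HasDerivAt u' (u'' x) x)
    (hM : Integrable M) (hu_le : ∀ x, |u x| ≤ M x) (hu'_le : ∀ x, |u' x| ≤ M x)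
    (hu''_le : ∀ x, |u'' x| ≤ M x) (hb : |b| ≤ 2) :
    ∫ ξ : ℝ, ‖∫ x : ℝ, ((u x * sigmoid (b * x) : ℝ) : ℂ) * cexp (I * x * ξ)‖ ≤
      10 * π * ∫ x, M x := by
  set f := fun x => u x * sigmoid (b * x)
  set f' := fun x => u' x * sigmoid (b * x) + b * (u x * (sigmoid (b * x) * (1 - sigmoid (b * x))))
  set f'' := fun x => u'' x * sigmoid (b * x) +
    2 * b * (u' x * (sigmoid (b * x) * (1 - sigmoid (b * x)))) +
    b ^ 2 * (u x * (sigmoid (b * x) * (1 - sigmoid (b * x)) * (1 - 2 * sigmoid (b * x))))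
  have hf (x : ℝ) : HasDerivAt f (f' x) x := hasDerivAt_mul_comp_const_mul hu hasDerivAt_sigmoid x
  have hf' (x : ℝ) : HasDerivAt f' (f'' x) x :=
    hasDerivAt_deriv_mul_comp_const_mul hu hu' hasDerivAt_sigmoid hasDerivAt_sigmoid_mul_one_sub x
  have hf_le (x : ℝ) : |f x| ≤ M x := abs_mul_sigmoid_le (hu_le x) _
  have hf'_le (x : ℝ) : |f' x| ≤ 3 * M x := abs_deriv_mul_sigmoid_le hb (hu_le x) (hu'_le x) _
  have hf''_le (x : ℝ) : |f'' x| ≤ 9 * M x :=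
    abs_deriv2_mul_sigmoid_le hb (hu_le x) (hu'_le x) (hu''_le x) _
  have hfi : Integrable f := hM.mono'
    (continuous_iff_continuousAt.2 fun x => (hf x).continuousAt).aestronglyMeasurable
    (Eventually.of_forall hf_le)
  have hf'i : Integrable f' := (hM.const_mul 3).mono' (aestronglyMeasurable_of_hasDerivAt hf)
    (Eventually.of_forall hf'_le)
  have hf''i : Integrable f'' := (hM.const_mul 9).mono' (aestronglyMeasurable_of_hasDerivAt hf')
    (Eventually.of_forall hf''_le)
  have hnorm (g : ℝ → ℝ) (x : ℝ) : ‖((g x : ℝ) : ℂ)‖ = |g x| := by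
    rw [Complex.norm_real, Real.norm_eq_abs]
  calc _ ≤ π * ((∫ x, ‖((f x : ℝ) : ℂ)‖) + ∫ x, ‖((f'' x : ℝ) : ℂ)‖) :=
        integral_norm_integral_mul_cexp_le (fun x => (hf x).ofReal_comp)
          (fun x => (hf' x).ofReal_comp) hfi.ofReal hf'i.ofReal hf''i.ofReal
    _ ≤ π * ((∫ x, M x) + ∫ x, 9 * M x) := by
        refine mul_le_mul_of_nonneg_left (add_le_add ?_ ?_) pi_pos.le
        · exact integral_mono hfi.ofReal.norm hM fun x => (hnorm f x).trans_le (hf_le x)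
        · exact integral_mono hf''i.ofReal.norm (hM.const_mul 9)
            fun x => (hnorm f'' x).trans_le (hf''_le x)
    _ = 10 * π * ∫ x, M x := by rw [integral_const_mul]; ring

section GaussianDensity

variable {μ : ℝ} {v : ℝ≥0}

theorem hasDerivAt_gaussianPDFReal (x : ℝ) :
    HasDerivAt (gaussianPDFReal μ v) (-(x - μ) / v * gaussianPDFReal μ v x) x := by
  refine ((((((hasDerivAt_id x).sub_const μ).pow 2).neg.div_const (2 * v)).exp).const_mul
    (√(2 * π * v))⁻¹).congr_deriv ?_
  simp only [gaussianPDFReal, id, Pi.pow_apply, Pi.neg_apply]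
  ring

theorem hasDerivAt_deriv_gaussianPDFReal (x : ℝ) :
    HasDerivAt (fun y => -(y - μ) / v * gaussianPDFReal μ v y)
      (((x - μ) ^ 2 / v ^ 2 - 1 / v) * gaussianPDFReal μ v x) x := by
  refine ((((hasDerivAt_id x).sub_const μ).neg.div_const (v : ℝ)).mul
    (hasDerivAt_gaussianPDFReal x)).congr_deriv ?_
  simp only [id, Pi.neg_apply]
  ring

theorem gaussianPDFReal_le_exp (hv : 1 ≤ v) (x : ℝ) :
    gaussianPDFReal μ v x ≤ rexp (-(x - μ) ^ 2 / (2 * v)) := by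
  have hv' : (1 : ℝ) ≤ v := hv
  have hnorm : (√(2 * π * v))⁻¹ ≤ 1 :=
    inv_le_one_of_one_le₀ (one_le_sqrt.2 (by nlinarith [pi_gt_three]))
  exact mul_le_of_le_one_left (exp_pos _).le hnorm

theorem one_add_sq_mul_gaussianPDFReal_le (hv₁ : 1 ≤ v) (hv₂ : v ≤ 2) (x : ℝ) :
    (1 + (x - μ) ^ 2) * gaussianPDFReal μ v x ≤ 8 * √(8 * π) * gaussianPDFReal μ 4 x := by
  have hv₁' : (1 : ℝ) ≤ v := hv₁
  have hv₂' : (v : ℝ) ≤ 2 := hv₂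
  have hexp : gaussianPDFReal μ v x ≤ rexp (-(x - μ) ^ 2 / 4) :=
    (gaussianPDFReal_le_exp hv₁ x).trans (exp_le_exp.2 (by
      rw [div_le_div_iff₀ (by positivity) (by norm_num)]; nlinarith [sq_nonneg (x - μ)]))
  have hpoly : 1 + (x - μ) ^ 2 ≤ 8 * rexp ((x - μ) ^ 2 / 8) := by
    nlinarith [add_one_le_exp ((x - μ) ^ 2 / 8)]
  have hvar4 : 8 * √(8 * π) * gaussianPDFReal μ 4 x = 8 * rexp (-(x - μ) ^ 2 / 8) := by
    have : √(8 * π) ≠ 0 := by positivity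
    simp only [gaussianPDFReal, NNReal.coe_ofNat]
    field_simp
    ring_nf
  calc (1 + (x - μ) ^ 2) * gaussianPDFReal μ v x
      ≤ 8 * rexp ((x - μ) ^ 2 / 8) * rexp (-(x - μ) ^ 2 / 4) :=
        mul_le_mul hpoly hexp (gaussianPDFReal_nonneg μ v x) (by positivity)
    _ = 8 * rexp (-(x - μ) ^ 2 / 8) := by rw [mul_assoc, ← Real.exp_add]; ring_nf
    _ = _ := hvar4.symm

theorem abs_deriv_gaussianPDFReal_le (hv : 1 ≤ v) (x : ℝ) :
    |-(x - μ) / v * gaussianPDFReal μ v x| ≤ (1 + (x - μ) ^ 2) * gaussianPDFReal μ v x := by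
  have hv' : (1 : ℝ) ≤ v := hv
  rw [abs_mul, abs_of_nonneg (gaussianPDFReal_nonneg μ v x), abs_div, abs_neg,
    abs_of_pos (by linarith : (0 : ℝ) < v)]
  refine mul_le_mul_of_nonneg_right ?_ (gaussianPDFReal_nonneg μ v x)
  calc |x - μ| / v ≤ |x - μ| := div_le_self (abs_nonneg _) hv'
    _ ≤ 1 + (x - μ) ^ 2 := by nlinarith [sq_abs (x - μ), sq_nonneg (|x - μ| - 1)]

theorem abs_deriv2_gaussianPDFReal_le (hv : 1 ≤ v) (x : ℝ) :
    |((x - μ) ^ 2 / v ^ 2 - 1 / v) * gaussianPDFReal μ v x| ≤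
      (1 + (x - μ) ^ 2) * gaussianPDFReal μ v x := by
  have hv' : (1 : ℝ) ≤ v := hv
  rw [abs_mul, abs_of_nonneg (gaussianPDFReal_nonneg μ v x)]
  refine mul_le_mul_of_nonneg_right ?_ (gaussianPDFReal_nonneg μ v x)
  have hsq : (x - μ) ^ 2 / v ^ 2 ≤ (x - μ) ^ 2 :=
    div_le_self (sq_nonneg _) (one_le_pow₀ hv')
  have hinv : 1 / (v : ℝ) ≤ 1 := by rw [div_le_one (by linarith)]; exact hv'
  have hinv' : 0 ≤ 1 / (v : ℝ) := by positivity
  rw [abs_le]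
  constructor <;> nlinarith [div_nonneg (sq_nonneg (x - μ)) (sq_nonneg (v : ℝ))]

end GaussianDensity

theorem integral_norm_integral_gaussianPDFReal_mul_sigmoid_cexp_le {μ b : ℝ} {v : ℝ≥0}
    (hv₁ : 1 ≤ v) (hv₂ : v ≤ 2) (hb : |b| ≤ 2) :
    ∫ ξ : ℝ, ‖∫ x : ℝ, ((gaussianPDFReal μ v x * sigmoid (b * x) : ℝ) : ℂ) * cexp (I * x * ξ)‖ ≤
      80 * π * √(8 * π) := by
  have hG (x : ℝ) : |gaussianPDFReal μ v x| ≤ (1 + (x - μ) ^ 2) * gaussianPDFReal μ v x := by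
    rw [abs_of_nonneg (gaussianPDFReal_nonneg μ v x)]
    exact le_mul_of_one_le_left (gaussianPDFReal_nonneg μ v x) (by nlinarith [sq_nonneg (x - μ)])
  have hM := (integrable_gaussianPDFReal μ 4).const_mul (8 * √(8 * π))
  have hmajorant (x : ℝ) := one_add_sq_mul_gaussianPDFReal_le (μ := μ) hv₁ hv₂ x
  calc _ ≤ 10 * π * ∫ x, 8 * √(8 * π) * gaussianPDFReal μ 4 x :=
        integral_norm_integral_mul_sigmoid_cexp_le hasDerivAt_gaussianPDFReal
          hasDerivAt_deriv_gaussianPDFReal hM (fun x => (hG x).trans (hmajorant x))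
          (fun x => (abs_deriv_gaussianPDFReal_le hv₁ x).trans (hmajorant x))
          (fun x => (abs_deriv2_gaussianPDFReal_le hv₁ x).trans (hmajorant x)) hb
    _ = 80 * π * √(8 * π) := by
        rw [integral_const_mul, integral_gaussianPDFReal_eq_one μ (by norm_num)]; ring

theorem div_one_add_exp_eq_gaussianPDFReal_mul_sigmoid {a : ℝ} (ha : 0 ≤ a) (x y : ℝ) :
    (2 * π * a) ^ (-(1/2) : ℝ) * rexp (-(x + 1) ^ 2 / (2 * a)) / (1 + rexp y) =
      gaussianPDFReal (-1) a.toNNReal x * sigmoid (-y) := by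
  rw [gaussianPDFReal, sigmoid_def, neg_neg, sub_neg_eq_add, Real.coe_toNNReal a ha,
    sqrt_eq_rpow, ← rpow_neg (by positivity), div_eq_mul_inv]

/-- uniform `L¹` bounds on the Fourier transforms of the kernels
`ψ±_a(x) = (2πa)^{-1/2} e^{-(x+1)²/(2a)} / (1 + e^{±2x/a})` for `a ∈ [7/4, 2]`. -/
theorem stmt_14 :
    ∃ C : ℝ, 0 < C ∧ ∀ a : ℝ, a ∈ Set.Icc (7/4 : ℝ) 2 →
      (∫ ξ : ℝ, ‖∫ x : ℝ,
          (((2 * Real.pi * a) ^ (-(1/2) : ℝ) * Real.exp (-(x + 1) ^ 2 / (2 * a)) /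
            (1 + Real.exp (2 * x / a)) : ℝ) : ℂ) * Complex.exp (Complex.I * x * ξ)‖) ≤ C ∧
      (∫ ξ : ℝ, ‖∫ x : ℝ,
          (((2 * Real.pi * a) ^ (-(1/2) : ℝ) * Real.exp (-(x + 1) ^ 2 / (2 * a)) /
            (1 + Real.exp (-(2 * x / a))) : ℝ) : ℂ) * Complex.exp (Complex.I * x * ξ)‖) ≤ C := by
  refine ⟨80 * π * √(8 * π), by positivity, fun a ⟨ha₁, ha₂⟩ => ?_⟩
  have hv₁ : 1 ≤ a.toNNReal := Real.one_le_toNNReal.2 (by linarith)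
  have hv₂ : a.toNNReal ≤ 2 := Real.toNNReal_le_ofNat.2 ha₂
  have hslope : |2 / a| ≤ 2 := by
    rw [abs_of_pos (by positivity), div_le_iff₀ (by linarith)]; linarith
  have hbound (b : ℝ) (hb : |b| ≤ 2) :=
    integral_norm_integral_gaussianPDFReal_mul_sigmoid_cexp_le (μ := -1) hv₁ hv₂ hb
  constructor
  · convert hbound (-(2 / a)) (by rwa [abs_neg]) using 6 with ξ x
    rw [div_one_add_exp_eq_gaussianPDFReal_mul_sigmoid (by linarith)]
    ring_nf
  · convert hbound (2 / a) hslope using 6 with ξ x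
    rw [div_one_add_exp_eq_gaussianPDFReal_mul_sigmoid (by linarith)]
    ring_nf

end
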